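/- arXiv:1212.1099 — 4 statements merged into one kernel-verified Lean document; each statement's English description precedes it below -/
import Mathlib

section
/- For every real-valued function f ∈ A(B) with f(x) ≥ 0 for all x ∈ X, there exists a monotonically nondecreasing sequence (f_n) of nonnegative functions f_n ∈ B that converges to f pointwise on X. -/
/-!
Choose `gₙ ∈ B` with `|Re f - gₙ| < εₙ`, `εₙ = 1/(n+1)`. By the Stone property
`(gₙ - εₙ)⁺ = gₙ - εₙ · min (gₙ/εₙ) 1` lies in `B`; since `Re f ≥ 0` it lies between `0` and `Re f`,
and within `2εₙ` of `Re f`. The running maxima of these functions,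
taken in the lattice `B`, form the required nondecreasing sequence.
-/

open MeasureTheory Filter Topology BoundedContinuousFunction
open scoped ZeroAtInfty ENNReal

/-- The complexification of a bounded real-valued function: we regard a bounded real
function on `X` as a bounded complex function. (`X` carries the discrete topology, so
`X →ᵇ ℝ` is exactly the space of bounded real-valued functions on `X`.) -/
noncomputable def cplx {X : Type*} [TopologicalSpace X] (f : X →ᵇ ℝ) : X →ᵇ ℂ :=
  BoundedContinuousFunction.comp Complex.ofReal Complex.isometry_ofReal.lipschitz f

/-- `A(B)`: the closure, in the supremum norm, of the complexification `B + iB` of a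
set `B` of bounded real-valued functions, inside the C*-algebra of all bounded
complex-valued functions on `X`. -/
noncomputable def AofB {X : Type*} [TopologicalSpace X] (B : Set (X →ᵇ ℝ)) : Set (X →ᵇ ℂ) :=
  closure {a : X →ᵇ ℂ | ∃ f ∈ B, ∃ g ∈ B, a = cplx f + Complex.I • cplx g}

lemma max_sub_zero_eq_sub_mul_min {a ε : ℝ} (hε : 0 < ε) :
    max (a - ε) 0 = a - ε * min (ε⁻¹ * a) 1 := by
  rcases le_total a ε with h | h
  · rw [max_eq_right (by linarith), min_eq_left (by rwa [inv_mul_le_iff₀ hε, mul_one]),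
      mul_inv_cancel_left₀ hε.ne']
    ring
  · rw [max_eq_left (by linarith), min_eq_right (by rwa [le_inv_mul_iff₀ hε, mul_one]), mul_one]

lemma re_cplx_add_I_smul_cplx {X : Type*} [TopologicalSpace X] (p q : X →ᵇ ℝ) (x : X) :
    ((cplx p + Complex.I • cplx q) x).re = p x := by
  simp [cplx]

lemma exists_mem_abs_re_sub_lt {X : Type*} [TopologicalSpace X] {B : Set (X →ᵇ ℝ)}
    {f : X →ᵇ ℂ} (hf : f ∈ AofB B) {ε : ℝ} (hε : 0 < ε) :
    ∃ g ∈ B, ∀ x, |(f x).re - g x| < ε := by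
  obtain ⟨_, ⟨p, hp, q, -, rfl⟩, hdist⟩ := Metric.mem_closure_iff.1 hf ε hε
  refine ⟨p, hp, fun x => ?_⟩
  calc |(f x).re - p x| = |(f x - (cplx p + Complex.I • cplx q) x).re| := by
        rw [Complex.sub_re, re_cplx_add_I_smul_cplx]
    _ ≤ dist (f x) ((cplx p + Complex.I • cplx q) x) :=
        (Complex.abs_re_le_norm _).trans_eq (dist_eq_norm _ _).symm
    _ ≤ dist f (cplx p + Complex.I • cplx q) := dist_coe_le_dist x
    _ < ε := hdist

section LatticeOfFunctions

variable {X : Type*} [TopologicalSpace X] {B : Set (X →ᵇ ℝ)}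

lemma exists_mem_eq_max_sub_zero (hBadd : ∀ f ∈ B, ∀ g ∈ B, f + g ∈ B)
    (hBsmul : ∀ (c : ℝ), ∀ f ∈ B, c • f ∈ B) (hBstone : ∀ f ∈ B, ∃ h ∈ B, ∀ x, h x = min (f x) 1)
    {g : X →ᵇ ℝ} (hg : g ∈ B) {ε : ℝ} (hε : 0 < ε) :
    ∃ t ∈ B, ∀ x, t x = max (g x - ε) 0 := by
  obtain ⟨k, hk, hkg⟩ := hBstone (ε⁻¹ • g) (hBsmul _ g hg)
  refine ⟨g + (-ε) • k, hBadd _ hg _ (hBsmul _ _ hk), fun x => ?_⟩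
  simp only [coe_add, coe_smul, Pi.add_apply, smul_eq_mul, hkg,
    max_sub_zero_eq_sub_mul_min hε]
  ring

lemma partialSups_mem (hBmax : ∀ f ∈ B, ∀ g ∈ B, ∃ h ∈ B, ∀ x, h x = max (f x) (g x))
    {v : ℕ → X →ᵇ ℝ} (hv : ∀ n, v n ∈ B) (n : ℕ) : partialSups v n ∈ B := by
  rw [partialSups_eq_sup'_range]
  refine Finset.sup'_induction _ _ (fun f hf g hg => ?_) fun k _ => hv k
  obtain ⟨h, hh, hhfg⟩ := hBmax f hf g hg
  convert hh
  ext x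
  exact (hhfg x).symm

lemma partialSups_apply_le {v : ℕ → X →ᵇ ℝ} {x : X} {c : ℝ} (hv : ∀ n, v n x ≤ c) (n : ℕ) :
    partialSups v n x ≤ c :=
  (partialSups_iff_forall (fun w : X →ᵇ ℝ => w x ≤ c) sup_le_iff).2 fun k _ => hv k

lemma exists_mem_nonneg_le_re_lt_add (hBadd : ∀ f ∈ B, ∀ g ∈ B, f + g ∈ B)
    (hBsmul : ∀ (c : ℝ), ∀ f ∈ B, c • f ∈ B) (hBstone : ∀ f ∈ B, ∃ h ∈ B, ∀ x, h x = min (f x) 1)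
    {f : X →ᵇ ℂ} (hf : f ∈ AofB B) (hpos : ∀ x, 0 ≤ (f x).re) {ε : ℝ} (hε : 0 < ε) :
    ∃ v ∈ B, ∀ x, 0 ≤ v x ∧ v x ≤ (f x).re ∧ (f x).re < v x + 2 * ε := by
  obtain ⟨g, hg, hfg⟩ := exists_mem_abs_re_sub_lt hf hε
  obtain ⟨t, ht, htg⟩ := exists_mem_eq_max_sub_zero hBadd hBsmul hBstone hg hε
  refine ⟨t, ht, fun x => ?_⟩
  obtain ⟨hgf, hfg'⟩ := abs_lt.1 (hfg x)
  rw [htg]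
  exact ⟨le_max_right _ _, max_le (by linarith) (hpos x),
    (by linarith : (f x).re < g x - ε + 2 * ε).trans_le (by gcongr; exact le_max_left _ _)⟩

end LatticeOfFunctions

theorem exists_monotone_approx_of_nonneg_general {X : Type*} [TopologicalSpace X]
    (B : Set (X →ᵇ ℝ))
    (hBadd : ∀ f ∈ B, ∀ g ∈ B, f + g ∈ B)
    (hBsmul : ∀ (c : ℝ), ∀ f ∈ B, c • f ∈ B)
    (hBmax : ∀ f ∈ B, ∀ g ∈ B, ∃ h ∈ B, ∀ x, h x = max (f x) (g x))
    (hBstone : ∀ f ∈ B, ∃ h ∈ B, ∀ x, h x = min (f x) 1)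
    (f : X →ᵇ ℂ) (hf : f ∈ AofB B)
    (hpos : ∀ x : X, 0 ≤ (f x).re) :
    ∃ u : ℕ → (X →ᵇ ℝ), (∀ n, u n ∈ B) ∧ (∀ n, ∀ x : X, 0 ≤ u n x) ∧
      (∀ n, ∀ x : X, u n x ≤ u (n + 1) x) ∧
      ∀ x : X, Tendsto (fun n => u n x) atTop (𝓝 ((f x).re)) := by
  choose v hvB hv using fun n : ℕ =>
    exists_mem_nonneg_le_re_lt_add hBadd hBsmul hBstone hf hpos (ε := 1 / (n + 1)) (by positivity)
  refine ⟨partialSups v, partialSups_mem hBmax hvB,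
    fun n x => (hv 0 x).1.trans (le_partialSups_of_le v n.zero_le x),
    fun n => (partialSups v).monotone n.le_succ, fun x => ?_⟩
  have hlower : Tendsto (fun n : ℕ => (f x).re - 2 * (1 / (n + 1))) atTop (𝓝 (f x).re) := by
    simpa using tendsto_const_nhds.sub
      ((tendsto_one_div_add_atTop_nhds_zero_nat (𝕜 := ℝ)).const_mul 2)
  exact tendsto_of_tendsto_of_tendsto_of_le_of_le hlower tendsto_const_nhds
    (fun n => (by linarith [(hv n x).2.2] : _ ≤ v n x).trans (le_partialSups v n x))
    (partialSups_apply_le fun k => (hv k x).2.1)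

/-- For every real-valued function `f ∈ A(B)` with `f x ≥ 0` for all
`x ∈ X`, there exists a monotonically nondecreasing sequence `(f_n)` of nonnegative
functions `f_n ∈ B` converging to `f` pointwise on `X`.  (No nowhere-vanishing
assumption on `B` is needed here.) -/
theorem exists_monotone_approx_of_nonneg {X : Type*} [Nonempty X] [TopologicalSpace X] [DiscreteTopology X]
    (B : Set (X →ᵇ ℝ))
    (hBadd : ∀ f ∈ B, ∀ g ∈ B, f + g ∈ B)
    (hBsmul : ∀ (c : ℝ), ∀ f ∈ B, c • f ∈ B)
    (hBmax : ∀ f ∈ B, ∀ g ∈ B, ∃ h ∈ B, ∀ x, h x = max (f x) (g x))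
    (hBmin : ∀ f ∈ B, ∀ g ∈ B, ∃ h ∈ B, ∀ x, h x = min (f x) (g x))
    (hBmul : ∀ f ∈ B, ∀ g ∈ B, f * g ∈ B)
    (hBstone : ∀ f ∈ B, ∃ h ∈ B, ∀ x, h x = min (f x) 1)
    (f : X →ᵇ ℂ) (hf : f ∈ AofB B) (hreal : ∀ x : X, (f x).im = 0)
    (hpos : ∀ x : X, 0 ≤ (f x).re) :
    ∃ u : ℕ → (X →ᵇ ℝ), (∀ n, u n ∈ B) ∧ (∀ n, ∀ x : X, 0 ≤ u n x) ∧
      (∀ n, ∀ x : X, u n x ≤ u (n + 1) x) ∧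
      ∀ x : X, Tendsto (fun n => u n x) atTop (𝓝 ((f x).re)) :=
  exists_monotone_approx_of_nonneg_general B hBadd hBsmul hBmax hBstone f hf hpos
end

section
/- The space B_c := {φ ∈ B : the Gelfand transform φ̂ has compact support in Δ} is dense in B with respect to the supremum norm: for every f ∈ B and every ε > 0 there exists φ ∈ B with φ̂ ∈ C_c(Δ) and sup_{x ∈ X} |f(x) − φ(x)| < ε. -/
open MeasureTheory Filter Topology BoundedContinuousFunction
open scoped ZeroAtInfty ENNReal

lemma cplx_apply {X : Type*} [TopologicalSpace X] (f : X →ᵇ ℝ) (x : X) :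
    cplx f x = (f x : ℂ) := rfl

lemma cplx_zero {X : Type*} [TopologicalSpace X] :
    cplx (0 : X →ᵇ ℝ) = 0 := by
  ext x; simp [cplx_apply]

lemma mem_AofB {X : Type*} [TopologicalSpace X] {B : Set (X →ᵇ ℝ)} {f : X →ᵇ ℝ}
    (hf : f ∈ B) (h0 : (0 : X →ᵇ ℝ) ∈ B) : cplx f ∈ AofB B := by
  apply subset_closure
  exact ⟨f, hf, 0, h0, by rw [cplx_zero, smul_zero, add_zero]⟩

/-- The space `B_c = {φ ∈ B : φ̂ has compact support in Δ}` is dense in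
`B` with respect to the supremum norm: for every `f ∈ B` and every `ε > 0` there exists
`φ ∈ B` whose Gelfand transform is compactly supported and with
`sup_{x ∈ X} |f x − φ x| < ε` (here pointwise: `|f x − φ x| < ε` for all `x`). -/
theorem compactlySupported_dense {X : Type*} [Nonempty X] [TopologicalSpace X] [DiscreteTopology X]
    (B : Set (X →ᵇ ℝ))
    (hBadd : ∀ f ∈ B, ∀ g ∈ B, f + g ∈ B)
    (hBsmul : ∀ (c : ℝ), ∀ f ∈ B, c • f ∈ B)
    (hBmax : ∀ f ∈ B, ∀ g ∈ B, ∃ h ∈ B, ∀ x, h x = max (f x) (g x))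
    (hBmin : ∀ f ∈ B, ∀ g ∈ B, ∃ h ∈ B, ∀ x, h x = min (f x) (g x))
    (hBmul : ∀ f ∈ B, ∀ g ∈ B, f * g ∈ B)
    (hBstone : ∀ f ∈ B, ∃ h ∈ B, ∀ x, h x = min (f x) 1)
    (hBnv : ∀ x : X, ∃ f ∈ B, f x ≠ 0)
    {Δ : Type*} [TopologicalSpace Δ] [LocallyCompactSpace Δ] [T2Space Δ]
    (ι : X → Δ) (hι : DenseRange ι)
    (G : (X →ᵇ ℂ) → C₀(Δ, ℂ))
    (hGeval : ∀ a ∈ AofB B, ∀ x : X, G a (ι x) = a x)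
    (hGsurj : ∀ h : C₀(Δ, ℂ), ∃ a ∈ AofB B, G a = h)
    (f : X →ᵇ ℝ) (hf : f ∈ B) (ε : ℝ) (hε : 0 < ε) :
    ∃ φ ∈ B, HasCompactSupport (⇑(G (cplx φ))) ∧ ∀ x : X, |f x - φ x| < ε := by
  set ε' : ℝ := ε / 2 with hε'def
  have hε' : 0 < ε' := by positivity
  have h0 : (0 : X →ᵇ ℝ) ∈ B := by
    have := hBsmul 0 f hf
    rwa [zero_smul] at this
  -- truncation at level ε' : for g ∈ B, the function x ↦ min (g x) ε' is in B
  have htrunc : ∀ g ∈ B, ∃ h ∈ B, ∀ x, h x = min (g x) ε' := by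
    intro g hg
    obtain ⟨h, hh, hhx⟩ := hBstone (ε'⁻¹ • g) (hBsmul ε'⁻¹ g hg)
    refine ⟨ε' • h, hBsmul ε' h hh, fun x => ?_⟩
    have : (ε' • h) x = ε' * min (ε'⁻¹ * g x) 1 := by
      simp [hhx x]
    rw [this, mul_min_of_nonneg _ _ hε'.le, mul_one, mul_inv_cancel_left₀ hε'.ne']
  -- positive and negative parts of f
  obtain ⟨fp, hfp, hfpx⟩ := hBmax f hf 0 h0
  obtain ⟨fm, hfm, hfmx⟩ := hBmax ((-1 : ℝ) • f) (hBsmul (-1) f hf) 0 h0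
  obtain ⟨tp, htp, htpx⟩ := htrunc fp hfp
  obtain ⟨tm, htm, htmx⟩ := htrunc fm hfm
  set φ : X →ᵇ ℝ := f + (-1 : ℝ) • (tp + (-1 : ℝ) • tm) with hφdef
  have hφB : φ ∈ B :=
    hBadd f hf _ (hBsmul (-1) _ (hBadd tp htp _ (hBsmul (-1) tm htm)))
  have hφx : ∀ x, φ x = f x - (min (max (f x) 0) ε' - min (max (-f x) 0) ε') := by
    intro x
    simp only [hφdef, BoundedContinuousFunction.coe_add, BoundedContinuousFunction.coe_smul,
      Pi.add_apply, Pi.smul_apply, smul_eq_mul]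
    rw [htpx x, htmx x, hfpx x, hfmx x]
    simp only [BoundedContinuousFunction.coe_smul, Pi.smul_apply, smul_eq_mul,
      BoundedContinuousFunction.coe_zero, Pi.zero_apply]
    ring_nf
  refine ⟨φ, hφB, ?_, ?_⟩
  · -- compact support
    set u := G (cplx f) with hu
    -- the truncation function on ℂ
    set F : ℂ → ℂ := fun z =>
      ((z.re - (min (max z.re 0) ε' - min (max (-z.re) 0) ε') : ℝ) : ℂ) with hF
    have hFcont : Continuous F := by
      apply Complex.continuous_ofReal.comp
      fun_prop
    have hFzero : ∀ z : ℂ, ‖z‖ < ε' → F z = 0 := by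
      intro z hz
      have hre : |z.re| < ε' := lt_of_le_of_lt (Complex.abs_re_le_norm z) hz
      have h1 : z.re ≤ ε' := le_of_lt (lt_of_le_of_lt (le_abs_self _) hre)
      have h2 : -z.re ≤ ε' := le_of_lt (lt_of_le_of_lt (neg_le_abs _) hre)
      simp only [hF]
      norm_cast
      rcases le_total z.re 0 with h | h
      · rw [max_eq_right h, max_eq_left (by linarith), min_eq_left h2,
          min_eq_left hε'.le]
        ring
      · rw [max_eq_left h, max_eq_right (by linarith), min_eq_left h1,
          min_eq_left hε'.le]
        ring
    -- G (cplx φ) = F ∘ u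
    have hkey : ⇑(G (cplx φ)) = F ∘ ⇑u := by
      apply hι.equalizer (map_continuous _) (hFcont.comp (map_continuous _))
      funext x
      have e1 : G (cplx φ) (ι x) = cplx φ x := hGeval _ (mem_AofB hφB h0) x
      have e2 : u (ι x) = cplx f x := hGeval _ (mem_AofB hf h0) x
      simp only [Function.comp_apply, e1, e2, cplx_apply]
      simp only [hF, Complex.ofReal_re]
      rw [hφx x]
    -- the set where ‖u‖ ≥ ε' is compact
    have hS : IsCompact {δ : Δ | ε' ≤ ‖u δ‖} := by
      have hten : Tendsto u (cocompact Δ) (𝓝 0) := zero_at_infty u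
      have hmem : u ⁻¹' (Metric.ball 0 ε') ∈ cocompact Δ :=
        hten (Metric.ball_mem_nhds 0 hε')
      obtain ⟨K, hK, hKsub⟩ := mem_cocompact.mp hmem
      have hclosed : IsClosed {δ : Δ | ε' ≤ ‖u δ‖} :=
        isClosed_le continuous_const ((map_continuous u).norm)
      apply hK.of_isClosed_subset hclosed
      intro δ hδ
      by_contra hδK
      have := hKsub hδK
      simp only [Set.mem_preimage, Metric.mem_ball, dist_zero_right] at this
      exact absurd hδ (not_le.mpr this)
    refine HasCompactSupport.of_support_subset_isCompact hS ?_
    intro δ hδ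
    simp only [Function.mem_support, hkey, Function.comp_apply] at hδ
    by_contra h
    exact hδ (hFzero _ (not_le.mp h))
  · -- pointwise estimate
    intro x
    rw [hφx x]
    have ha0 : 0 ≤ min (max (f x) 0) ε' := le_min (le_max_right _ _) hε'.le
    have ha1 : min (max (f x) 0) ε' ≤ ε' := min_le_right _ _
    have hb0 : 0 ≤ min (max (-f x) 0) ε' := le_min (le_max_right _ _) hε'.le
    have hb1 : min (max (-f x) 0) ε' ≤ ε' := min_le_right _ _
    rw [abs_lt]
    constructor <;> [nlinarith; nlinarith]
end

section
/- The form (Ê, B̂(E)) is closable on L²(Δ, μ̂; ℝ): every sequence (f_n) ⊂ B(E) such that lim_{n,m→∞} E(f_n − f_m, f_n − f_m) = 0 and f̂_n → 0 in L²(Δ, μ̂; ℝ) satisfies lim_{n→∞} E(f_n, f_n) = 0. -/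
open MeasureTheory Filter Topology BoundedContinuousFunction
open scoped ZeroAtInfty ENNReal

/-- `B(E)`: the bounded measurable functions on `X` whose `μ`-equivalence class lies in
`F ∩ L¹(X, μ)` (here `F` is a set of functions closed under `μ`-a.e. modification, playing
the role of the domain of the Dirichlet form). -/
def BE {X : Type*} [TopologicalSpace X] {mX : MeasurableSpace X} (μ : Measure X)
    (F : Set (X → ℝ)) : Set (X →ᵇ ℝ) :=
  {f : X →ᵇ ℝ | Measurable (⇑f) ∧ (⇑f : X → ℝ) ∈ F ∧ Integrable (⇑f) μ}


/-!
`B(E)` is stable under the truncations `min (max f 0) t` (Markov property and scaling), and the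
transform commutes with them because it is determined by its values on the dense image of `X`.
So the identity `∫ f dμ = ∫ f̂ dμ̂` holds for every truncation of `f` and `-f`, and
Riemann–Stieltjes sums in the truncation level express `∫ f²` through these integrals:
`‖f‖_{L²(μ)} ≤ ‖f̂‖_{L²(μ̂)}`. Hence `f̂ₙ → 0` forces `fₙ → 0` in `L²(μ)`, and closability
follows from closedness of `(E, F)`: the `E₁`-limit of `fₙ` vanishes a.e.
-/

section RiemannSums

/-- A Riemann–Stieltjes sum of `b ^ 2 = ∫₀^b 2s ds` with mesh `δ`; it is linear in the
truncations `min b (i * δ)`, whose integrals are the ones that transfer. -/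
def stairSum (δ : ℝ) (k : ℕ) (b : ℝ) : ℝ :=
  ∑ i ∈ Finset.range k, 2 * ((i + 1) * δ) * (min b ((i + 1) * δ) - min b (i * δ))

lemma sq_min_sub_sq_min_le {b t s : ℝ} (hts : t ≤ s) :
    min b s ^ 2 - min b t ^ 2 ≤ 2 * s * (min b s - min b t) := by
  nlinarith [min_le_min (le_refl b) hts, min_le_right b s]

lemma le_sq_min_sub_sq_min {b t s : ℝ} (hts : t ≤ s) :
    2 * t * (min b s - min b t) ≤ min b s ^ 2 - min b t ^ 2 := by
  rcases le_total b t with h | h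
  · simp [min_eq_left h, min_eq_left (h.trans hts)]
  · have h1 : t ≤ min b s := le_min h hts
    nlinarith [min_eq_right h]

lemma sum_range_sq_min_sub {b δ : ℝ} (hb : 0 ≤ b) (k : ℕ) :
    ∑ i ∈ Finset.range k, (min b ((i + 1) * δ) ^ 2 - min b (i * δ) ^ 2) = min b (k * δ) ^ 2 := by
  have := Finset.sum_range_sub (fun i : ℕ => min b (i * δ) ^ 2) k
  push_cast at this
  simp [this, min_eq_right hb]

lemma sq_le_stairSum {b δ : ℝ} {k : ℕ} (hb : 0 ≤ b) (hδ : 0 ≤ δ) (hbk : b ≤ k * δ) :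
    b ^ 2 ≤ stairSum δ k b := by
  calc b ^ 2 = ∑ i ∈ Finset.range k, (min b ((i + 1) * δ) ^ 2 - min b (i * δ) ^ 2) := by
        rw [sum_range_sq_min_sub hb, min_eq_left hbk]
    _ ≤ stairSum δ k b :=
        Finset.sum_le_sum fun i _ => sq_min_sub_sq_min_le (by nlinarith)

lemma stairSum_le {b δ : ℝ} (hb : 0 ≤ b) (hδ : 0 ≤ δ) (k : ℕ) :
    stairSum δ k b ≤ b ^ 2 + 2 * δ * b := by
  have htel := Finset.sum_range_sub (fun i : ℕ => min b (i * δ)) k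
  push_cast at htel
  calc stairSum δ k b
      ≤ ∑ i ∈ Finset.range k, ((min b ((i + 1) * δ) ^ 2 - min b (i * δ) ^ 2)
          + 2 * δ * (min b ((i + 1) * δ) - min b (i * δ))) := by
        refine Finset.sum_le_sum fun i _ => ?_
        have := le_sq_min_sub_sq_min (b := b) (t := i * δ) (s := (i + 1) * δ) (by nlinarith)
        nlinarith
    _ = min b (k * δ) ^ 2 + 2 * δ * min b (k * δ) := by
        rw [Finset.sum_add_distrib, sum_range_sq_min_sub hb, ← Finset.mul_sum, htel]
        simp [min_eq_right hb]
    _ ≤ b ^ 2 + 2 * δ * b := by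
        have h0 : 0 ≤ min b (k * δ) := le_min hb (by positivity)
        have h1 : min b (k * δ) ≤ b := min_le_left _ _
        nlinarith

end RiemannSums

section Integrals

variable {α : Type*} [MeasurableSpace α] {μ : Measure α} {a : α → ℝ}

theorem MeasureTheory.Integrable.min_const_of_nonneg (ha : Integrable a μ)
    (ha0 : ∀ x, 0 ≤ a x) {t : ℝ} (ht : 0 ≤ t) : Integrable (fun x => min (a x) t) μ :=
  ha.mono (ha.1.inf aestronglyMeasurable_const) <| ae_of_all _ fun x => by
    simp only [Real.norm_eq_abs]
    rw [abs_of_nonneg (le_min (ha0 x) ht), abs_of_nonneg (ha0 x)]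
    exact min_le_left _ _

theorem MeasureTheory.Integrable.sq_of_abs_le (ha : Integrable a μ) {M : ℝ}
    (haM : ∀ x, |a x| ≤ M) :
    Integrable (fun x => a x ^ 2) μ := by
  simpa [sq] using ha.bdd_mul ha.1 (c := M) (ae_of_all _ fun x => by simpa using haM x)

lemma integral_stairSum (ha : Integrable a μ) (ha0 : ∀ x, 0 ≤ a x) {δ : ℝ} (hδ : 0 ≤ δ)
    (k : ℕ) :
    Integrable (fun x => stairSum δ k (a x)) μ ∧
    ∫ x, stairSum δ k (a x) ∂μ = ∑ i ∈ Finset.range k, 2 * ((i + 1) * δ) *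
      (∫ x, min (a x) ((i + 1) * δ) ∂μ - ∫ x, min (a x) (i * δ) ∂μ) := by
  have hmin : ∀ t : ℝ, 0 ≤ t → Integrable (fun x => min (a x) t) μ :=
    fun t ht => ha.min_const_of_nonneg ha0 ht
  have hterm : ∀ i : ℕ, Integrable (fun x => 2 * ((i + 1) * δ) *
      (min (a x) ((i + 1) * δ) - min (a x) (i * δ))) μ :=
    fun i => ((hmin _ (by positivity)).sub (hmin _ (by positivity))).const_mul _
  refine ⟨integrable_finsetSum _ fun i _ => hterm i, ?_⟩
  simp only [stairSum]
  rw [integral_finsetSum _ fun i _ => hterm i]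
  refine Finset.sum_congr rfl fun i _ => ?_
  rw [integral_const_mul, integral_sub (hmin _ (by positivity)) (hmin _ (by positivity))]

end Integrals

section SquareTransfer

variable {α β : Type*} [MeasurableSpace α] [MeasurableSpace β] {μ : Measure α} {ν : Measure β}

theorem integral_sq_le_of_integral_min_eq {a : α → ℝ} {b : β → ℝ} {M : ℝ}
    (ha : Integrable a μ) (ha0 : ∀ x, 0 ≤ a x) (haM : ∀ x, a x ≤ M)
    (hb : Integrable b ν) (hb0 : ∀ y, 0 ≤ b y) (hbM : ∀ y, b y ≤ M)
    (h : ∀ t > 0, ∫ x, min (a x) t ∂μ = ∫ y, min (b y) t ∂ν) :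
    ∫ x, a x ^ 2 ∂μ ≤ ∫ y, b y ^ 2 ∂ν := by
  have hmin : ∀ t ≥ 0, ∫ x, min (a x) t ∂μ = ∫ y, min (b y) t ∂ν := by
    intro t ht
    rcases ht.eq_or_lt with rfl | ht
    · simp [min_eq_right (ha0 _), min_eq_right (hb0 _)]
    · exact h t ht
  have ha2 := ha.sq_of_abs_le (M := M) fun x => by rw [abs_of_nonneg (ha0 x)]; exact haM x
  have hb2 := hb.sq_of_abs_le (M := M) fun y => by rw [abs_of_nonneg (hb0 y)]; exact hbM y
  have hstep : ∀ δ > 0, ∫ x, a x ^ 2 ∂μ ≤ ∫ y, b y ^ 2 ∂ν + 2 * δ * ∫ y, b y ∂ν := by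
    intro δ hδ
    set k := ⌈M / δ⌉₊
    have hMk : M ≤ k * δ := (div_le_iff₀ hδ).1 (Nat.le_ceil _)
    obtain ⟨hSa, hSa_eq⟩ := integral_stairSum ha ha0 hδ.le k
    obtain ⟨hSb, hSb_eq⟩ := integral_stairSum hb hb0 hδ.le k
    calc ∫ x, a x ^ 2 ∂μ ≤ ∫ x, stairSum δ k (a x) ∂μ :=
          integral_mono ha2 hSa fun x => sq_le_stairSum (ha0 x) hδ.le ((haM x).trans hMk)
      _ = ∫ y, stairSum δ k (b y) ∂ν := by
          rw [hSa_eq, hSb_eq]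
          refine Finset.sum_congr rfl fun i _ => ?_
          rw [hmin _ (by positivity), hmin _ (by positivity)]
      _ ≤ ∫ y, (b y ^ 2 + 2 * δ * b y) ∂ν :=
          integral_mono hSb (hb2.add (hb.const_mul _)) fun y => stairSum_le (hb0 y) hδ.le k
      _ = ∫ y, b y ^ 2 ∂ν + 2 * δ * ∫ y, b y ∂ν := by
          rw [integral_add hb2 (hb.const_mul _), integral_const_mul]
  set I := ∫ y, b y ∂ν
  have hI : 0 ≤ I := integral_nonneg hb0
  refine le_of_forall_pos_le_add fun ε hε => (hstep (ε / (2 * (I + 1))) (by positivity)).trans ?_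
  gcongr
  calc 2 * (ε / (2 * (I + 1))) * I ≤ 2 * (ε / (2 * (I + 1))) * (I + 1) := by gcongr; linarith
    _ = ε := by field_simp

lemma sq_eq_sq_max_add_sq_max_neg (a : ℝ) : a ^ 2 = max a 0 ^ 2 + max (-a) 0 ^ 2 := by
  rcases le_total a 0 with h | h
  · rw [max_eq_right h, max_eq_left (by linarith)]; ring
  · rw [max_eq_left h, max_eq_right (by linarith)]; ring

theorem integral_sq_le_of_integral_trunc_eq {f : α → ℝ} {g : β → ℝ} {M : ℝ}
    (hf : Integrable f μ) (hfM : ∀ x, |f x| ≤ M) (hg : Integrable g ν) (hgM : ∀ y, |g y| ≤ M)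
    (hpos : ∀ t > 0, ∫ x, min (max (f x) 0) t ∂μ = ∫ y, min (max (g y) 0) t ∂ν)
    (hneg : ∀ t > 0, ∫ x, min (max (-f x) 0) t ∂μ = ∫ y, min (max (-g y) 0) t ∂ν) :
    ∫ x, f x ^ 2 ∂μ ≤ ∫ y, g y ^ 2 ∂ν := by
  have hposM : ∀ {s}, |s| ≤ M → max s 0 ≤ M := fun hs =>
    max_le ((le_abs_self _).trans hs) ((abs_nonneg _).trans hs)
  have hnegM : ∀ {s}, |s| ≤ M → max (-s) 0 ≤ M := fun hs => hposM (by rwa [abs_neg])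
  have habs : ∀ {s : ℝ}, |max s 0| = max s 0 := fun {s} => abs_of_nonneg (le_max_right s 0)
  have hf2 := hf.pos_part.sq_of_abs_le fun x => habs.trans_le (hposM (hfM x))
  have hf2' := hf.neg_part.sq_of_abs_le fun x => habs.trans_le (hnegM (hfM x))
  have hg2 := hg.pos_part.sq_of_abs_le fun y => habs.trans_le (hposM (hgM y))
  have hg2' := hg.neg_part.sq_of_abs_le fun y => habs.trans_le (hnegM (hgM y))
  simp only [sq_eq_sq_max_add_sq_max_neg (f _), sq_eq_sq_max_add_sq_max_neg (g _)]
  rw [integral_add hf2 hf2', integral_add hg2 hg2']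
  gcongr ?_ + ?_
  · exact integral_sq_le_of_integral_min_eq hf.pos_part (fun _ => le_max_right _ _)
      (fun x => hposM (hfM x)) hg.pos_part (fun _ => le_max_right _ _) (fun y => hposM (hgM y))
      hpos
  · exact integral_sq_le_of_integral_min_eq hf.neg_part (fun _ => le_max_right _ _)
      (fun x => hnegM (hfM x)) hg.neg_part (fun _ => le_max_right _ _) (fun y => hnegM (hgM y))
      hneg

end SquareTransfer

theorem eLpNorm_two_le_of_integral_sq_le {α β : Type*} [MeasurableSpace α] [MeasurableSpace β]
    {μ : Measure α} {ν : Measure β} {f : α → ℝ} {g : β → ℝ} (hf : MemLp f 2 μ)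
    (hg : MemLp g 2 ν) (h : ∫ x, f x ^ 2 ∂μ ≤ ∫ y, g y ^ 2 ∂ν) :
    eLpNorm f 2 μ ≤ eLpNorm g 2 ν := by
  rw [hf.eLpNorm_eq_integral_rpow_norm two_ne_zero ENNReal.ofNat_ne_top,
    hg.eLpNorm_eq_integral_rpow_norm two_ne_zero ENNReal.ofNat_ne_top]
  gcongr
  simpa using h

section GelfandTransform

variable {X Δ : Type*} [TopologicalSpace X] [TopologicalSpace Δ] {B : Set (X →ᵇ ℝ)}
  {ι : X → Δ} {G : (X →ᵇ ℂ) → C₀(Δ, ℂ)} {f g : X →ᵇ ℝ}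

/-- For the Gelfand transform `G` and `f ∈ B(E)`, `hat G f` is `f̂`. -/
noncomputable def hat (G : (X →ᵇ ℂ) → C₀(Δ, ℂ)) (f : X →ᵇ ℝ) (φ : Δ) : ℝ := (G (cplx f) φ).re

lemma continuous_hat : Continuous (hat G f) :=
  Complex.continuous_re.comp (map_continuous (G (cplx f)))

lemma cplx_mem_AofB (h0 : 0 ∈ B) (hf : f ∈ B) : cplx f ∈ AofB B :=
  subset_closure ⟨f, hf, 0, h0, by ext x; simp [cplx]⟩

lemma hat_apply_of_mem (hGeval : ∀ a ∈ AofB B, ∀ x : X, G a (ι x) = a x) (h0 : 0 ∈ B)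
    (hf : f ∈ B) (x : X) : hat G f (ι x) = f x := by
  rw [hat, hGeval _ (cplx_mem_AofB h0 hf)]
  rfl

lemma hat_eq_comp_of_mem (hι : DenseRange ι)
    (hGeval : ∀ a ∈ AofB B, ∀ x : X, G a (ι x) = a x) (h0 : 0 ∈ B) (hf : f ∈ B) (hg : g ∈ B)
    {ψ : ℝ → ℝ} (hψ : Continuous ψ) (hgf : ∀ x, g x = ψ (f x)) : hat G g = ψ ∘ hat G f :=
  hι.equalizer continuous_hat (hψ.comp continuous_hat) <| funext fun x => by
    simp [hat_apply_of_mem hGeval h0, hf, hg, hgf]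

lemma abs_hat_le_norm (hι : DenseRange ι) (hGeval : ∀ a ∈ AofB B, ∀ x : X, G a (ι x) = a x)
    (h0 : 0 ∈ B) (hf : f ∈ B) (φ : Δ) : |hat G f φ| ≤ ‖f‖ :=
  hι.induction_on φ (isClosed_le (continuous_abs.comp continuous_hat) continuous_const)
    fun x => by simpa [hat_apply_of_mem hGeval h0 hf] using f.norm_coe_le_norm x

end GelfandTransform

section BoundedFunctionsOfForm

variable {X Δ : Type*} [TopologicalSpace X] {mX : MeasurableSpace X} {μ : Measure X}
  {F : Set (X → ℝ)} {f : X →ᵇ ℝ}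

noncomputable def truncPos (t : ℝ) (f : X →ᵇ ℝ) : X →ᵇ ℝ :=
  BoundedContinuousFunction.comp (fun s => min (max s 0) t)
    ((LipschitzWith.id.max_const 0).min_const t) f

lemma truncPos_apply (t : ℝ) (f : X →ᵇ ℝ) (x : X) : truncPos t f x = min (max (f x) 0) t := rfl

lemma zero_mem_BE (hFsmul : ∀ (c : ℝ), ∀ f ∈ F, c • f ∈ F) (hf : f ∈ BE μ F) : 0 ∈ BE μ F :=
  ⟨measurable_const, by simpa using hFsmul 0 _ hf.2.1, integrable_zero X ℝ μ⟩

lemma neg_mem_BE (hFsmul : ∀ (c : ℝ), ∀ f ∈ F, c • f ∈ F) (hf : f ∈ BE μ F) : -f ∈ BE μ F :=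
  ⟨hf.1.neg, by simpa using hFsmul (-1) _ hf.2.1, hf.2.2.neg⟩

lemma truncPos_mem_BE (hFsmul : ∀ (c : ℝ), ∀ f ∈ F, c • f ∈ F)
    (hMarkov : ∀ f ∈ F, (fun x => min (max (f x) 0) 1) ∈ F)
    (hf : f ∈ BE μ F) {t : ℝ} (ht : 0 < t) : truncPos t f ∈ BE μ F := by
  have hmeas : Measurable (truncPos t f) :=
    ((measurable_id.max measurable_const).min measurable_const).comp hf.1
  refine ⟨hmeas, ?_, hf.2.2.mono hmeas.aestronglyMeasurable (ae_of_all _ fun x => ?_)⟩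
  · convert hFsmul t _ (hMarkov _ (hFsmul t⁻¹ _ hf.2.1)) using 1
    funext x
    simp only [truncPos_apply, Pi.smul_apply, smul_eq_mul]
    rw [mul_min_of_nonneg _ _ ht.le, mul_max_of_nonneg _ _ ht.le, mul_inv_cancel_left₀ ht.ne']
    simp
  · rw [truncPos_apply, Real.norm_eq_abs, Real.norm_eq_abs,
      abs_of_nonneg (le_min (le_max_right _ _) ht.le)]
    exact (min_le_left _ _).trans (max_le (le_abs_self _) (abs_nonneg _))

variable [TopologicalSpace Δ] [MeasurableSpace Δ] {ι : X → Δ} {G : (X →ᵇ ℂ) → C₀(Δ, ℂ)}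
  {ν : Measure Δ}

theorem eLpNorm_le_eLpNorm_hat (hF2 : ∀ f ∈ F, MemLp f 2 μ)
    (hFsmul : ∀ (c : ℝ), ∀ f ∈ F, c • f ∈ F)
    (hMarkov : ∀ f ∈ F, (fun x => min (max (f x) 0) 1) ∈ F) (hι : DenseRange ι)
    (hGeval : ∀ a ∈ AofB (BE μ F), ∀ x : X, G a (ι x) = a x)
    (hν : ∀ f ∈ BE μ F, Integrable (fun φ => ((G (cplx f)) φ).re) ν ∧
      ∫ x, f x ∂μ = ∫ φ, ((G (cplx f)) φ).re ∂ν)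
    (hf : f ∈ BE μ F) : eLpNorm f 2 μ ≤ eLpNorm (hat G f) 2 ν := by
  have h0 := zero_mem_BE hFsmul hf
  have htrunc : ∀ g ∈ BE μ F, ∀ t > 0,
      ∫ x, min (max (g x) 0) t ∂μ = ∫ φ, min (max (hat G g φ) 0) t ∂ν := by
    intro g hg t ht
    have hmem := truncPos_mem_BE hFsmul hMarkov hg ht
    have hcomp := hat_eq_comp_of_mem hι hGeval h0 hg hmem (ψ := fun s => min (max s 0) t)
      (by fun_prop) (truncPos_apply t g)
    calc ∫ x, min (max (g x) 0) t ∂μ = ∫ φ, hat G (truncPos t g) φ ∂ν := (hν _ hmem).2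
      _ = _ := by rw [hcomp]; rfl
  have hneg : hat G (-f) = fun φ => -hat G f φ :=
    hat_eq_comp_of_mem hι hGeval h0 hf (neg_mem_BE hFsmul hf) continuous_neg fun _ => rfl
  have hbound : ∀ φ, |hat G f φ| ≤ ‖f‖ := abs_hat_le_norm hι hGeval h0 hf
  have hhat : Integrable (hat G f) ν := (hν f hf).1
  refine eLpNorm_two_le_of_integral_sq_le (hF2 _ hf.2.1)
    ((memLp_two_iff_integrable_sq hhat.1).2 (hhat.sq_of_abs_le hbound)) ?_
  refine integral_sq_le_of_integral_trunc_eq hf.2.2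
    (fun x => by simpa using f.norm_coe_le_norm x) hhat hbound (htrunc f hf) fun t ht => ?_
  simpa [hneg] using htrunc (-f) (neg_mem_BE hFsmul hf) t ht

end BoundedFunctionsOfForm

theorem ae_eq_zero_of_tendsto_eLpNorm {α : Type*} [MeasurableSpace α] {μ : Measure α}
    {p : ℝ≥0∞} (hp : 1 ≤ p) {u : ℕ → α → ℝ} {v : α → ℝ}
    (hu : ∀ n, AEStronglyMeasurable (u n) μ) (hv : AEStronglyMeasurable v μ)
    (hu0 : Tendsto (fun n => eLpNorm (u n) p μ) atTop (𝓝 0))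
    (huv : Tendsto (fun n => eLpNorm (u n - v) p μ) atTop (𝓝 0)) : v =ᵐ[μ] 0 := by
  have hle : ∀ n, eLpNorm v p μ ≤ eLpNorm (u n) p μ + eLpNorm (u n - v) p μ := fun n => by
    simpa using eLpNorm_sub_le (hu n) ((hu n).sub hv) hp
  have h0 : eLpNorm v p μ ≤ 0 := by simpa using ge_of_tendsto' (hu0.add huv) hle
  exact (eLpNorm_eq_zero_iff hv (by positivity)).1 (le_antisymm h0 zero_le)

theorem tendsto_toReal_eLpNorm_sub_sq {α : Type*} [MeasurableSpace α] {μ : Measure α}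
    {u : ℕ → α → ℝ} (hu : ∀ n, AEStronglyMeasurable (u n) μ)
    (hu0 : Tendsto (fun n => eLpNorm (u n) 2 μ) atTop (𝓝 0)) :
    Tendsto (fun p : ℕ × ℕ => (eLpNorm (u p.1 - u p.2) 2 μ).toReal ^ 2) atTop (𝓝 0) := by
  rw [← prod_atTop_atTop_eq]
  have hsum : Tendsto (fun p : ℕ × ℕ => eLpNorm (u p.1) 2 μ + eLpNorm (u p.2) 2 μ)
      (atTop ×ˢ atTop) (𝓝 0) := by
    simpa using (hu0.comp tendsto_fst).add (hu0.comp tendsto_snd)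
  have h := tendsto_of_tendsto_of_tendsto_of_le_of_le tendsto_const_nhds hsum
    (fun _ => zero_le) fun p => eLpNorm_sub_le (hu _) (hu _) one_le_two
  simpa using ((ENNReal.tendsto_toReal ENNReal.zero_ne_top).comp h).pow 2

theorem tendsto_form_zero_of_closed {X : Type*} {mX : MeasurableSpace X} {μ : Measure X}
    {F : Set (X → ℝ)} {E : (X → ℝ) → (X → ℝ) → ℝ}
    (hF2 : ∀ f ∈ F, MemLp f 2 μ)
    (hFadd : ∀ f ∈ F, ∀ g ∈ F, f + g ∈ F)
    (hFsmul : ∀ (c : ℝ), ∀ f ∈ F, c • f ∈ F)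
    (hEsymm : ∀ f g, E f g = E g f)
    (hEae : ∀ f g f' : X → ℝ, f' =ᵐ[μ] f → E f g = E f' g)
    (hEpos : ∀ f ∈ F, 0 ≤ E f f)
    (hEclosed : ∀ u : ℕ → (X → ℝ), (∀ n, u n ∈ F) →
      (∀ ε > 0, ∃ N, ∀ n ≥ N, ∀ m ≥ N,
        E (u n - u m) (u n - u m) + ((eLpNorm (u n - u m) 2 μ).toReal) ^ 2 < ε) →
      ∃ v ∈ F, Tendsto
        (fun n => E (u n - v) (u n - v) + ((eLpNorm (u n - v) 2 μ).toReal) ^ 2)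
        atTop (𝓝 0))
    {u : ℕ → X → ℝ} (hu : ∀ n, u n ∈ F)
    (hCauchy : ∀ ε > 0, ∃ N, ∀ n ≥ N, ∀ m ≥ N, E (u n - u m) (u n - u m) < ε)
    (hL2 : Tendsto (fun n => eLpNorm (u n) 2 μ) atTop (𝓝 0)) :
    Tendsto (fun n => E (u n) (u n)) atTop (𝓝 0) := by
  have hsub : ∀ f ∈ F, ∀ g ∈ F, f - g ∈ F := fun f hf g hg => by
    simpa [sub_eq_add_neg] using hFadd f hf _ (hFsmul (-1) g hg)
  have hEsub : Tendsto (fun p : ℕ × ℕ => E (u p.1 - u p.2) (u p.1 - u p.2)) atTop (𝓝 0) := by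
    refine tendsto_order.2 ⟨fun a ha => Eventually.of_forall fun p =>
      ha.trans_le (hEpos _ (hsub _ (hu _) _ (hu _))), fun ε hε => ?_⟩
    exact (eventually_atTop_prod_self' (p := fun q => E (u q.1 - u q.2) (u q.1 - u q.2) < ε)).2
      (hCauchy ε hε)
  have hsum := hEsub.add (tendsto_toReal_eLpNorm_sub_sq (fun n => (hF2 _ (hu n)).1) hL2)
  rw [add_zero] at hsum
  obtain ⟨v, hvF, hv⟩ := hEclosed u hu fun ε hε =>
    (eventually_atTop_prod_self' (p := fun q => E (u q.1 - u q.2) (u q.1 - u q.2)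
      + (eLpNorm (u q.1 - u q.2) 2 μ).toReal ^ 2 < ε)).1 ((tendsto_order.1 hsum).2 ε hε)
  have hnn : ∀ n, 0 ≤ E (u n - v) (u n - v) := fun n => hEpos _ (hsub _ (hu n) _ hvF)
  have hE : Tendsto (fun n => E (u n - v) (u n - v)) atTop (𝓝 0) :=
    squeeze_zero hnn (fun n => le_add_of_nonneg_right (sq_nonneg _)) hv
  have hL : Tendsto (fun n => eLpNorm (u n - v) 2 μ) atTop (𝓝 0) := by
    rw [← ENNReal.tendsto_toReal_iff (fun n => ((hF2 _ (hu n)).sub (hF2 _ hvF)).2.ne)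
      ENNReal.zero_ne_top]
    simpa using (squeeze_zero (fun n => sq_nonneg _)
      (fun n => le_add_of_nonneg_left (hnn n)) hv).sqrt
  have hv0 : v =ᵐ[μ] 0 :=
    ae_eq_zero_of_tendsto_eLpNorm one_le_two (fun n => (hF2 _ (hu n)).1) (hF2 _ hvF).1 hL2 hL
  have hEv : ∀ n, E (u n) (u n) = E (u n - v) (u n - v) := fun n => by
    have h : u n - v =ᵐ[μ] u n := by filter_upwards [hv0] with x hx; simp [hx]
    rw [hEae _ _ _ h, hEsymm, hEae _ _ _ h]
  simpa only [hEv] using hE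

theorem transferred_form_closable_general {X : Type*} [TopologicalSpace X]
    {mX : MeasurableSpace X} (μ : Measure X)
    (F : Set (X → ℝ)) (E : (X → ℝ) → (X → ℝ) → ℝ)
    -- (E, F) is a symmetric Dirichlet form on L²(X, μ; ℝ):
    (hF2 : ∀ f ∈ F, MemLp f 2 μ)
    (hFadd : ∀ f ∈ F, ∀ g ∈ F, f + g ∈ F)
    (hFsmul : ∀ (c : ℝ), ∀ f ∈ F, c • f ∈ F)
    (hEsymm : ∀ f g, E f g = E g f)
    (hEae : ∀ f g f' : X → ℝ, f' =ᵐ[μ] f → E f g = E f' g)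
    (hEpos : ∀ f ∈ F, 0 ≤ E f f)
    -- closedness: F is complete in the norm (E(u,u) + ‖u‖²_{L²})^{1/2}
    (hEclosed : ∀ u : ℕ → (X → ℝ), (∀ n, u n ∈ F) →
      (∀ ε > 0, ∃ N, ∀ n ≥ N, ∀ m ≥ N,
        E (u n - u m) (u n - u m) + ((eLpNorm (u n - u m) 2 μ).toReal) ^ 2 < ε) →
      ∃ v ∈ F, Tendsto
        (fun n => E (u n - v) (u n - v) + ((eLpNorm (u n - v) 2 μ).toReal) ^ 2)
        atTop (𝓝 0))
    -- Markov property
    (hMarkov : ∀ f ∈ F, (fun x => min (max (f x) 0) 1) ∈ F ∧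
      E (fun x => min (max (f x) 0) 1) (fun x => min (max (f x) 0) 1) ≤ E f f)
    {Δ : Type*} [TopologicalSpace Δ] [MeasurableSpace Δ]
    (ι : X → Δ) (hι : DenseRange ι)
    (G : (X →ᵇ ℂ) → C₀(Δ, ℂ))
    (hGeval : ∀ a ∈ AofB (BE μ F), ∀ x : X, G a (ι x) = a x)
    (ν : Measure Δ)
    (hν : ∀ f ∈ BE μ F, Integrable (fun φ => ((G (cplx f)) φ).re) ν ∧
      ∫ x, f x ∂μ = ∫ φ, ((G (cplx f)) φ).re ∂ν)
    (u : ℕ → (X →ᵇ ℝ)) (hu : ∀ n, u n ∈ BE μ F)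
    (hCauchy : ∀ ε > 0, ∃ N, ∀ n ≥ N, ∀ m ≥ N,
      E (⇑(u n) - ⇑(u m)) (⇑(u n) - ⇑(u m)) < ε)
    (hL2 : Tendsto (fun n => eLpNorm (fun φ => ((G (cplx (u n))) φ).re) 2 ν) atTop (𝓝 0)) :
    Tendsto (fun n => E (⇑(u n)) (⇑(u n))) atTop (𝓝 0) := by
  refine tendsto_form_zero_of_closed hF2 hFadd hFsmul hEsymm hEae hEpos hEclosed
    (u := fun n => ⇑(u n)) (fun n => (hu n).2.1) hCauchy ?_
  exact tendsto_of_tendsto_of_tendsto_of_le_of_le tendsto_const_nhds hL2 (fun _ => zero_le)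
    fun n => eLpNorm_le_eLpNorm_hat hF2 hFsmul (fun f hf => (hMarkov f hf).1) hι hGeval hν (hu n)

/-- The form `(Ê, B̂(E))` is closable on `L²(Δ, μ̂; ℝ)`: every sequence
`(f_n) ⊆ B(E)` such that `E(f_n − f_m, f_n − f_m) → 0` as `n, m → ∞` and such that
`f̂_n → 0` in `L²(Δ, μ̂; ℝ)` satisfies `E(f_n, f_n) → 0`.  (Recall `Ê(f̂, ĝ) = E(f, g)`.) -/
theorem transferred_form_closable {X : Type*} [Nonempty X] [TopologicalSpace X] [DiscreteTopology X]
    {mX : MeasurableSpace X} (μ : Measure X)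
    (F : Set (X → ℝ)) (E : (X → ℝ) → (X → ℝ) → ℝ)
    -- (E, F) is a symmetric Dirichlet form on L²(X, μ; ℝ):
    (hF2 : ∀ f ∈ F, MemLp f 2 μ)
    (hFae : ∀ f ∈ F, ∀ g : X → ℝ, g =ᵐ[μ] f → g ∈ F)
    (hFadd : ∀ f ∈ F, ∀ g ∈ F, f + g ∈ F)
    (hFsmul : ∀ (c : ℝ), ∀ f ∈ F, c • f ∈ F)
    (hFdense : Dense {h : Lp ℝ 2 μ | ∃ f ∈ F, (⇑h : X → ℝ) =ᵐ[μ] f})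
    (hEsymm : ∀ f g, E f g = E g f)
    (hEae : ∀ f g f' : X → ℝ, f' =ᵐ[μ] f → E f g = E f' g)
    (hEadd : ∀ f ∈ F, ∀ g ∈ F, ∀ h ∈ F, E (f + g) h = E f h + E g h)
    (hEsmul : ∀ (c : ℝ), ∀ f ∈ F, ∀ g ∈ F, E (c • f) g = c * E f g)
    (hEpos : ∀ f ∈ F, 0 ≤ E f f)
    -- closedness: F is complete in the norm (E(u,u) + ‖u‖²_{L²})^{1/2}
    (hEclosed : ∀ u : ℕ → (X → ℝ), (∀ n, u n ∈ F) →
      (∀ ε > 0, ∃ N, ∀ n ≥ N, ∀ m ≥ N,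
        E (u n - u m) (u n - u m) + ((eLpNorm (u n - u m) 2 μ).toReal) ^ 2 < ε) →
      ∃ v ∈ F, Tendsto
        (fun n => E (u n - v) (u n - v) + ((eLpNorm (u n - v) 2 μ).toReal) ^ 2)
        atTop (𝓝 0))
    -- Markov property
    (hMarkov : ∀ f ∈ F, (fun x => min (max (f x) 0) 1) ∈ F ∧
      E (fun x => min (max (f x) 0) 1) (fun x => min (max (f x) 0) 1) ≤ E f f)
    -- B(E) vanishes nowhere and is separable in the supremum norm
    (hnv : ∀ x : X, ∃ f ∈ BE μ F, f x ≠ 0)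
    (hsep : TopologicalSpace.IsSeparable (BE μ F))
    {Δ : Type*} [TopologicalSpace Δ] [LocallyCompactSpace Δ] [T2Space Δ]
    [SecondCountableTopology Δ] [MeasurableSpace Δ] [BorelSpace Δ]
    (ι : X → Δ) (hι : DenseRange ι)
    (G : (X →ᵇ ℂ) → C₀(Δ, ℂ))
    (hGeval : ∀ a ∈ AofB (BE μ F), ∀ x : X, G a (ι x) = a x)
    (hGsurj : ∀ h : C₀(Δ, ℂ), ∃ a ∈ AofB (BE μ F), G a = h)
    (ν : Measure Δ) (hνreg : ν.Regular)
    (hν : ∀ f ∈ BE μ F, Integrable (fun φ => ((G (cplx f)) φ).re) ν ∧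
      ∫ x, f x ∂μ = ∫ φ, ((G (cplx f)) φ).re ∂ν)
    (u : ℕ → (X →ᵇ ℝ)) (hu : ∀ n, u n ∈ BE μ F)
    (hCauchy : ∀ ε > 0, ∃ N, ∀ n ≥ N, ∀ m ≥ N,
      E (⇑(u n) - ⇑(u m)) (⇑(u n) - ⇑(u m)) < ε)
    (hL2 : Tendsto (fun n => eLpNorm (fun φ => ((G (cplx (u n))) φ).re) 2 ν) atTop (𝓝 0)) :
    Tendsto (fun n => E (⇑(u n)) (⇑(u n))) atTop (𝓝 0) :=
  transferred_form_closable_general (mX := mX) μ F E hF2 hFadd hFsmul hEsymm hEae hEpos hEclosed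
    hMarkov ι hι G hGeval ν hν u hu hCauchy hL2
end

section
/- Let (E, F) be a resistance form on a countable set V*. Then there exists a finite measure μ on V* (defined on all subsets of V*) such that μ({x}) > 0 for every x ∈ V* and every u ∈ F is square-integrable with respect to μ, i.e. Σ_{x ∈ V*} u(x)² μ({x}) < ∞. -/
/-!
Fix a base point `x₀`. By the definition of the effective resistance,
`(u x - u x₀)² ≤ R(x, x₀) E(u, u)` for every `u ∈ F`, hence
`u x² ≤ (2 E(u, u) + 2 u(x₀)²) (1 + R(x, x₀))`: every `u ∈ F` grows at most like
`1 + R(·, x₀)`. On a countable set there are strictly positive weights `δ` making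
`∑ (1 + R(x, x₀)) δ(x)` finite, and the measure with these point masses does the job.
-/

open MeasureTheory Filter Topology

/-- A resistance form `(E, F)` on a set `V` in the sense of Kigami:
(RF1) `F` is a linear subspace of the real-valued functions on `V` containing the
constants, and `E` is a nonnegative definite symmetric bilinear form on `F` with
`E(u,u) = 0` iff `u` is constant; (RF2) the quotient of `F` by the constants is complete
in the seminorm `E(u,u)^{1/2}`; (RF3) finite sets admit arbitrary extensions; (RF4) the
effective resistance between any two points is finite; (RF5) the Markov property. -/
structure ResistanceForm (V : Type*) where
  F : Set (V → ℝ)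
  E : (V → ℝ) → (V → ℝ) → ℝ
  const_mem : ∀ c : ℝ, (fun _ => c) ∈ F
  add_mem : ∀ u ∈ F, ∀ v ∈ F, u + v ∈ F
  smul_mem : ∀ (c : ℝ), ∀ u ∈ F, c • u ∈ F
  symm : ∀ u v, E u v = E v u
  add_left : ∀ u ∈ F, ∀ v ∈ F, ∀ w ∈ F, E (u + v) w = E u w + E v w
  smul_left : ∀ (c : ℝ), ∀ u ∈ F, ∀ v ∈ F, E (c • u) v = c * E u v
  nonneg : ∀ u ∈ F, 0 ≤ E u u
  zero_iff : ∀ u ∈ F, (E u u = 0 ↔ ∃ c : ℝ, ∀ x, u x = c)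
  complete : ∀ u : ℕ → (V → ℝ), (∀ n, u n ∈ F) →
    (∀ ε > 0, ∃ N, ∀ n ≥ N, ∀ m ≥ N, E (u n - u m) (u n - u m) < ε) →
    ∃ v ∈ F, Tendsto (fun n => E (u n - v) (u n - v)) atTop (𝓝 0)
  finite_ext : ∀ (V' : Finset V) (v : V → ℝ), ∃ u ∈ F, ∀ x ∈ V', u x = v x
  resistance_bdd : ∀ x y : V,
    BddAbove {r : ℝ | ∃ u ∈ F, 0 < E u u ∧ r = (u x - u y) ^ 2 / E u u}
  markov : ∀ u ∈ F, (fun x => min (max (u x) 0) 1) ∈ F ∧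
    E (fun x => min (max (u x) 0) 1) (fun x => min (max (u x) 0) 1) ≤ E u u

open scoped ENNReal NNReal

namespace ResistanceForm

variable {V : Type*} (RF : ResistanceForm V)

/-- The effective resistance `R(x, y)` of (RF4). -/
noncomputable def resistance (x y : V) : ℝ :=
  sSup {r : ℝ | ∃ u ∈ RF.F, 0 < RF.E u u ∧ r = (u x - u y) ^ 2 / RF.E u u}

lemma resistance_nonneg (x y : V) : 0 ≤ RF.resistance x y := by
  refine Real.sSup_nonneg fun r ⟨u, _, hE, hr⟩ => ?_
  rw [hr]
  positivity

variable {RF}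

lemma sq_sub_le_resistance_mul {u : V → ℝ} (hu : u ∈ RF.F) (x y : V) :
    (u x - u y) ^ 2 ≤ RF.resistance x y * RF.E u u := by
  rcases (RF.nonneg u hu).lt_or_eq with hE | hE
  · rw [← div_le_iff₀ hE]
    exact le_csSup (RF.resistance_bdd x y) ⟨u, hu, hE, rfl⟩
  · obtain ⟨c, hc⟩ := (RF.zero_iff u hu).1 hE.symm
    simp [hc, ← hE]

lemma sq_le_mul_one_add_resistance {u : V → ℝ} (hu : u ∈ RF.F) (x y : V) :
    u x ^ 2 ≤ (2 * RF.E u u + 2 * u y ^ 2) * (1 + RF.resistance x y) := by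
  have hdiff := sq_sub_le_resistance_mul hu x y
  have hR := RF.resistance_nonneg x y
  have hE := RF.nonneg u hu
  nlinarith [sq_nonneg (u x - 2 * u y), mul_nonneg hR (sq_nonneg (u y))]

end ResistanceForm

lemma exists_isFiniteMeasure_pos_tsum_mul_lt_top {V : Type*} [Countable V] [MeasurableSpace V]
    [MeasurableSingletonClass V] (g : V → ℝ≥0∞) (hg : ∀ x, g x ≠ ∞) :
    ∃ μ : Measure V, IsFiniteMeasure μ ∧ (∀ x, 0 < μ {x}) ∧ ∑' x, g x * μ {x} < ∞ := by
  obtain ⟨δ, hδ_pos, hδ_sum⟩ :=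
    ENNReal.exists_pos_tsum_mul_lt_of_countable one_ne_zero (fun x => 1 + g x)
      fun x => ENNReal.add_ne_top.2 ⟨ENNReal.one_ne_top, hg x⟩
  set μ := Measure.count.withDensity fun x => (δ x : ℝ≥0∞)
  have hμ : ∀ x, μ {x} = δ x := fun x => by
    rw [withDensity_apply' _, lintegral_singleton, Measure.count_singleton, mul_one]
  have hδ_sum_lt_top : ∑' x, (1 + g x) * μ {x} < ∞ := by
    simp_rw [hμ]
    exact hδ_sum.trans ENNReal.one_lt_top
  refine ⟨μ, ⟨?_⟩, fun x => hμ x ▸ ENNReal.coe_pos.2 (hδ_pos x), ?_⟩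
  · rw [withDensity_apply' _, Measure.restrict_univ, lintegral_count]
    refine lt_of_le_of_lt (ENNReal.tsum_le_tsum fun x => ?_) hδ_sum_lt_top
    rw [hμ]
    exact le_mul_of_one_le_left' le_self_add
  · exact lt_of_le_of_lt (ENNReal.tsum_le_tsum fun x => by gcongr; exact le_add_self)
      hδ_sum_lt_top

/-- Let `(E, F)` be a resistance form on a countable set `V*`.  Then
there exists a finite measure `μ` on `V*` (defined on all subsets of `V*`) such that
`μ({x}) > 0` for every `x ∈ V*` and every `u ∈ F` is square-integrable with respect to
`μ`, i.e. `Σ_{x ∈ V*} u(x)² μ({x}) < ∞`. -/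
theorem resistance_form_exists_measure (V : Type*) [Countable V]
    (RF : ResistanceForm V) :
    ∃ μ : @Measure V ⊤, IsFiniteMeasure μ ∧ (∀ x : V, 0 < μ {x}) ∧
      ∀ u ∈ RF.F, ∑' x : V, ENNReal.ofReal (u x ^ 2) * μ {x} < ⊤ := by
  let : MeasurableSpace V := ⊤
  rcases isEmpty_or_nonempty V with _ | ⟨⟨x₀⟩⟩
  · exact ⟨0, inferInstance, isEmptyElim, fun _ _ => by simp⟩
  obtain ⟨μ, hμ_fin, hμ_pos, hμ_sum⟩ := exists_isFiniteMeasure_pos_tsum_mul_lt_top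
    (fun x => ENNReal.ofReal (1 + RF.resistance x x₀)) fun _ => ENNReal.ofReal_ne_top
  refine ⟨μ, hμ_fin, hμ_pos, fun u hu => ?_⟩
  set C := 2 * RF.E u u + 2 * u x₀ ^ 2
  have hC : 0 ≤ C := by have := RF.nonneg u hu; positivity
  calc ∑' x, ENNReal.ofReal (u x ^ 2) * μ {x}
      ≤ ∑' x, ENNReal.ofReal C * (ENNReal.ofReal (1 + RF.resistance x x₀) * μ {x}) := by
        refine ENNReal.tsum_le_tsum fun x => ?_
        rw [← mul_assoc, ← ENNReal.ofReal_mul hC]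
        gcongr
        exact ResistanceForm.sq_le_mul_one_add_resistance hu x x₀
    _ = ENNReal.ofReal C * ∑' x, ENNReal.ofReal (1 + RF.resistance x x₀) * μ {x} :=
        ENNReal.tsum_mul_left
    _ < ⊤ := ENNReal.mul_lt_top ENNReal.ofReal_lt_top hμ_sum
end
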